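/- The recursive contraction algorithm is correct: for any tensor network N and any contraction tree T for N (a rooted binary tree whose leaves are exactly the tensors of N), recursively contracting according to T—returning the single tensor when |N| = 1, and otherwise contracting the results of the two immediate subtrees—yields the contraction of N. -/

import Mathlib

open scoped Classical

noncomputable section

/-- A tensor over a finite set of indices `idx`, with domains `D i` for each index.
Values are given as a function of total assignments, depending only on `idx`. -/
structure Tensor (Ind : Type) (D : Ind → Type) where
  idx : Finset Ind
  val : (∀ i, D i) → ℝ
  depends : ∀ σ τ : (∀ i, D i), (∀ i ∈ idx, σ i = τ i) → val σ = val τ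

namespace Tensor

variable {Ind : Type} {D : Ind → Type} [∀ i, Fintype (D i)]

/-- Override a total assignment `σ` on the indices in `I` using `ρ`. -/
def override (σ : ∀ i, D i) {I : Finset Ind} (ρ : ∀ i : I, D i) : ∀ i, D i :=
  fun i => if h : i ∈ I then ρ ⟨i, h⟩ else σ i

/-- Number of tensors of the network `A` in which index `i` appears. -/
def count {κ : Type} [Fintype κ] (A : κ → Tensor Ind D) (i : Ind) : ℕ :=
  (Finset.univ.filter fun k => i ∈ (A k).idx).card

/-- A family of tensors is a tensor network if no index appears more than twice. -/
def IsNetwork {κ : Type} [Fintype κ] (A : κ → Tensor Ind D) : Prop :=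
  ∀ i, count A i ≤ 2

/-- Bond indices: appearing in exactly two tensors. -/
def bonds {κ : Type} [Fintype κ] (A : κ → Tensor Ind D) : Finset Ind :=
  (Finset.univ.biUnion fun k => (A k).idx).filter fun i => count A i = 2

/-- Free indices: appearing in exactly one tensor. -/
def frees {κ : Type} [Fintype κ] (A : κ → Tensor Ind D) : Finset Ind :=
  (Finset.univ.biUnion fun k => (A k).idx).filter fun i => count A i = 1

/-- The contraction of a tensor network, as a function of total assignments
(its value depends only on the free indices): sum over all assignments of the
bond indices of the product of the tensor entries. -/
def contract {κ : Type} [Fintype κ] (A : κ → Tensor Ind D) (σ : ∀ i, D i) : ℝ :=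
  ∑ ρ : ∀ i : (bonds A : Finset Ind), D i, ∏ k, (A k).val (override σ ρ)

end Tensor

/-- The binary contraction `A · B` of two tensors: indices are the symmetric
difference of the index sets, values sum over assignments of the shared indices. -/
def Tensor.binContract {Ind : Type} {D : Ind → Type} [∀ i, Fintype (D i)]
    (A B : Tensor Ind D) : Tensor Ind D where
  idx := (A.idx \ B.idx) ∪ (B.idx \ A.idx)
  val σ := ∑ ρ : ∀ i : (A.idx ∩ B.idx : Finset Ind), D i,
      A.val (Tensor.override σ ρ) * B.val (Tensor.override σ ρ)
  depends σ τ h := by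
    refine Finset.sum_congr rfl fun ρ _ => ?_
    have hA : A.val (Tensor.override σ ρ) = A.val (Tensor.override τ ρ) := by
      refine A.depends _ _ fun i hi => ?_
      unfold Tensor.override
      by_cases hI : i ∈ A.idx ∩ B.idx
      · simp [hI]
      · simp only [dif_neg hI]
        exact h i (Finset.mem_union.mpr (Or.inl (Finset.mem_sdiff.mpr
          ⟨hi, fun hB => hI (Finset.mem_inter.mpr ⟨hi, hB⟩)⟩)))
    have hB : B.val (Tensor.override σ ρ) = B.val (Tensor.override τ ρ) := by
      refine B.depends _ _ fun i hi => ?_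
      unfold Tensor.override
      by_cases hI : i ∈ A.idx ∩ B.idx
      · simp [hI]
      · simp only [dif_neg hI]
        exact h i (Finset.mem_union.mpr (Or.inr (Finset.mem_sdiff.mpr
          ⟨hi, fun hA' => hI (Finset.mem_inter.mpr ⟨hA', hi⟩)⟩)))
    rw [hA, hB]

/-- A contraction tree: a rooted binary tree whose leaves are tensors. -/
inductive CTree (Ind : Type) (D : Ind → Type) : Type
  | leaf : Tensor Ind D → CTree Ind D
  | node : CTree Ind D → CTree Ind D → CTree Ind D

namespace CTree

variable {Ind : Type} {D : Ind → Type}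

/-- The list of leaf tensors of a contraction tree. -/
def leaves : CTree Ind D → List (Tensor Ind D)
  | .leaf A => [A]
  | .node l r => l.leaves ++ r.leaves

/-- Recursive contraction along a contraction tree: a single tensor at a leaf, and the
binary contraction of the results of the two immediate subtrees at a node. -/
def eval [∀ i, Fintype (D i)] : CTree Ind D → Tensor Ind D
  | .leaf A => A
  | .node l r => Tensor.binContract l.eval r.eval

/-- The list of all subtrees of a contraction tree (whose evaluations are exactly the
tensors appearing during the recursive contraction). -/
def subtrees : CTree Ind D → List (CTree Ind D)
  | .leaf A => [.leaf A]
  | .node l r => .node l r :: (l.subtrees ++ r.subtrees)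

/-- The family of leaf tensors of a contraction tree, indexed by leaf position. -/
def leafFamily (T : CTree Ind D) : Fin T.leaves.length → Tensor Ind D :=
  fun k => T.leaves.get k

end CTree

/-! Induction on the tree. If a network is split into two parts `A₁` and `A₂` and no index
occurs more than twice, its bonds are the bonds of `A₁`, the bonds of `A₂` and the indices
free in both parts, while its free indices are those free in exactly one part. Summing
first over the indices free in both parts, the sum over the bonds of each part factors,
which is exactly the binary contraction of the two partial contractions. -/

namespace Tensor

variable {Ind : Type} {D : Ind → Type}

section Count

variable {κ κ₁ κ₂ : Type} [Fintype κ] [Fintype κ₁] [Fintype κ₂]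

lemma mem_biUnion_idx_of_count_ne_zero {A : κ → Tensor Ind D} {i : Ind}
    (h : count A i ≠ 0) : i ∈ Finset.univ.biUnion fun k => (A k).idx := by
  obtain ⟨k, hk⟩ := Finset.card_ne_zero.mp h
  exact Finset.mem_biUnion.mpr ⟨k, Finset.mem_univ k, (Finset.mem_filter.mp hk).2⟩

lemma mem_bonds {A : κ → Tensor Ind D} {i : Ind} : i ∈ bonds A ↔ count A i = 2 :=
  Finset.mem_filter.trans <| and_iff_right_of_imp fun h =>
    mem_biUnion_idx_of_count_ne_zero (by omega)

lemma mem_frees {A : κ → Tensor Ind D} {i : Ind} : i ∈ frees A ↔ count A i = 1 :=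
  Finset.mem_filter.trans <| and_iff_right_of_imp fun h =>
    mem_biUnion_idx_of_count_ne_zero (by omega)

lemma count_comp_equiv (e : κ₁ ≃ κ) (A : κ → Tensor Ind D) (i : Ind) :
    count (A ∘ e) i = count A i := by
  simp only [count, Finset.card_filter]
  exact e.sum_comp fun k => if i ∈ (A k).idx then 1 else 0

lemma count_sum_elim (A₁ : κ₁ → Tensor Ind D) (A₂ : κ₂ → Tensor Ind D) (i : Ind) :
    count (Sum.elim A₁ A₂) i = count A₁ i + count A₂ i := by
  simp only [count, Finset.card_filter, Fintype.sum_sum_type, Sum.elim_inl, Sum.elim_inr]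
  rfl

lemma count_const [Unique κ] (A : Tensor Ind D) (i : Ind) :
    count (fun _ : κ => A) i = if i ∈ A.idx then 1 else 0 := by
  by_cases h : i ∈ A.idx <;> simp [count, h]

lemma isNetwork_comp_equiv (e : κ₁ ≃ κ) {A : κ → Tensor Ind D} :
    IsNetwork (A ∘ e) ↔ IsNetwork A := by
  simp only [IsNetwork, count_comp_equiv]

end Count

section Split

variable {κ₁ κ₂ : Type} [Fintype κ₁] [Fintype κ₂]
  {A₁ : κ₁ → Tensor Ind D} {A₂ : κ₂ → Tensor Ind D}

lemma IsNetwork.count_add_count_le (hnet : IsNetwork (Sum.elim A₁ A₂)) (i : Ind) :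
    count A₁ i + count A₂ i ≤ 2 :=
  count_sum_elim A₁ A₂ i ▸ hnet i

lemma IsNetwork.sum_elim_left (hnet : IsNetwork (Sum.elim A₁ A₂)) : IsNetwork A₁ :=
  fun i => by have := hnet.count_add_count_le i; omega

lemma IsNetwork.sum_elim_right (hnet : IsNetwork (Sum.elim A₁ A₂)) : IsNetwork A₂ :=
  fun i => by have := hnet.count_add_count_le i; omega

lemma frees_sum_elim (hnet : IsNetwork (Sum.elim A₁ A₂)) :
    frees (Sum.elim A₁ A₂) = (frees A₁ \ frees A₂) ∪ (frees A₂ \ frees A₁) := by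
  ext i
  have := hnet.count_add_count_le i
  simp only [Finset.mem_union, Finset.mem_sdiff, mem_frees, count_sum_elim]
  omega

lemma bonds_sum_elim (hnet : IsNetwork (Sum.elim A₁ A₂)) :
    bonds (Sum.elim A₁ A₂) = (bonds A₁ ∪ bonds A₂) ∪ (frees A₁ ∩ frees A₂) := by
  ext i
  have := hnet.count_add_count_le i
  simp only [Finset.mem_union, Finset.mem_inter, mem_bonds, mem_frees, count_sum_elim]
  omega

lemma disjoint_bonds_of_sum_elim (hnet : IsNetwork (Sum.elim A₁ A₂)) :
    Disjoint (bonds A₁) (bonds A₂) :=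
  Finset.disjoint_left.mpr fun {i} h₁ h₂ => by
    have := hnet.count_add_count_le i
    rw [mem_bonds] at h₁ h₂
    omega

lemma disjoint_bonds_union_frees_inter (hnet : IsNetwork (Sum.elim A₁ A₂)) :
    Disjoint (bonds A₁ ∪ bonds A₂) (frees A₁ ∩ frees A₂) :=
  Finset.disjoint_left.mpr fun {i} h₁ h₂ => by
    have := hnet.count_add_count_le i
    rw [Finset.mem_union, mem_bonds, mem_bonds] at h₁
    rw [Finset.mem_inter, mem_frees, mem_frees] at h₂
    omega

lemma disjoint_idx_left_bonds_right (hnet : IsNetwork (Sum.elim A₁ A₂)) (k : κ₁) :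
    Disjoint (A₁ k).idx (bonds A₂) :=
  Finset.disjoint_left.mpr fun {i} hi h₂ => by
    have := hnet.count_add_count_le i
    have : count A₁ i ≠ 0 :=
      Finset.card_ne_zero.mpr ⟨k, Finset.mem_filter.mpr ⟨Finset.mem_univ k, hi⟩⟩
    rw [mem_bonds] at h₂
    omega

lemma disjoint_idx_right_bonds_left (hnet : IsNetwork (Sum.elim A₁ A₂)) (k : κ₂) :
    Disjoint (A₂ k).idx (bonds A₁) := by
  refine disjoint_idx_left_bonds_right (A₂ := A₁) (fun i => ?_) k
  rw [count_sum_elim, add_comm, ← count_sum_elim]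
  exact hnet i

end Split

section Override

variable {I J : Finset Ind}

lemma override_of_mem (σ : ∀ i, D i) (ρ : ∀ i : I, D i) {i : Ind} (h : i ∈ I) :
    override σ ρ i = ρ ⟨i, h⟩ := dif_pos h

lemma override_of_notMem (σ : ∀ i, D i) (ρ : ∀ i : I, D i) {i : Ind} (h : i ∉ I) :
    override σ ρ i = σ i := dif_neg h

lemma val_override_of_disjoint (A : Tensor Ind D) (h : Disjoint A.idx I)
    (σ : ∀ i, D i) (ρ : ∀ i : I, D i) : A.val (override σ ρ) = A.val σ :=
  A.depends _ _ fun _ hi => override_of_notMem σ ρ (Finset.disjoint_left.mp h hi)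

lemma override_comm (h : Disjoint I J) (σ : ∀ i, D i) (ρ : ∀ i : I, D i)
    (τ : ∀ i : J, D i) : override (override σ τ) ρ = override (override σ ρ) τ := by
  funext i
  by_cases hI : i ∈ I
  · have hJ : i ∉ J := Finset.disjoint_left.mp h hI
    rw [override_of_mem _ _ hI, override_of_notMem _ _ hJ, override_of_mem _ _ hI]
  · rw [override_of_notMem _ _ hI]
    by_cases hJ : i ∈ J
    · rw [override_of_mem _ _ hJ, override_of_mem _ _ hJ]
    · rw [override_of_notMem _ _ hJ, override_of_notMem _ _ hJ, override_of_notMem _ _ hI]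

lemma override_piFinsetUnion (h : Disjoint I J) (σ : ∀ i, D i) (ρ : ∀ i : I, D i)
    (τ : ∀ i : J, D i) :
    override σ (Equiv.piFinsetUnion D h (ρ, τ)) = override (override σ τ) ρ := by
  funext i
  by_cases hI : i ∈ I
  · rw [override_of_mem _ _ (Finset.mem_union_left J hI), override_of_mem _ _ hI,
      Equiv.piFinsetUnion_left D h hI]
  · rw [override_of_notMem _ _ hI]
    by_cases hJ : i ∈ J
    · rw [override_of_mem _ _ (Finset.mem_union_right I hJ), override_of_mem _ _ hJ,
        Equiv.piFinsetUnion_right D h hJ]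
    · rw [override_of_notMem _ _ (by simp [hI, hJ]), override_of_notMem _ _ hJ]

end Override

section Contract

variable [∀ i, Fintype (D i)] {κ κ₁ κ₂ : Type} [Fintype κ] [Fintype κ₁] [Fintype κ₂]

lemma sum_piFinsetUnion {I J : Finset Ind} (h : Disjoint I J)
    (f : (∀ i : (I ∪ J : Finset Ind), D i) → ℝ) :
    ∑ ρ, f ρ = ∑ ρ : ∀ i : I, D i, ∑ τ : ∀ i : J, D i, f (Equiv.piFinsetUnion D h (ρ, τ)) := by
  rw [← (Equiv.piFinsetUnion D h).sum_comp, Fintype.sum_prod_type]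

lemma contract_comp_equiv (e : κ₁ ≃ κ) (A : κ → Tensor Ind D) (σ : ∀ i, D i) :
    contract (A ∘ e) σ = contract A σ := by
  have hbonds : bonds (A ∘ e) = bonds A := by
    ext i
    rw [mem_bonds, mem_bonds, count_comp_equiv]
  rw [contract, contract, hbonds]
  exact Finset.sum_congr rfl fun ρ _ => e.prod_comp fun k => (A k).val (override σ ρ)

theorem contract_sum_elim {A₁ : κ₁ → Tensor Ind D} {A₂ : κ₂ → Tensor Ind D}
    (hnet : IsNetwork (Sum.elim A₁ A₂)) (σ : ∀ i, D i) :
    contract (Sum.elim A₁ A₂) σ = ∑ ρ : ∀ i : (frees A₁ ∩ frees A₂ : Finset Ind), D i,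
      contract A₁ (override σ ρ) * contract A₂ (override σ ρ) := by
  have hbonds := disjoint_bonds_of_sum_elim hnet
  simp only [contract]
  rw [bonds_sum_elim hnet, sum_piFinsetUnion (disjoint_bonds_union_frees_inter hnet),
    Finset.sum_comm]
  refine Finset.sum_congr rfl fun ρ _ => ?_
  rw [sum_piFinsetUnion hbonds, Finset.sum_mul_sum]
  refine Finset.sum_congr rfl fun ρ₁ _ => Finset.sum_congr rfl fun ρ₂ _ => ?_
  rw [override_piFinsetUnion, override_piFinsetUnion, Fintype.prod_sum_type]
  simp only [Sum.elim_inl, Sum.elim_inr]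
  congr 1
  · refine Finset.prod_congr rfl fun k _ => ?_
    rw [override_comm hbonds, val_override_of_disjoint _ (disjoint_idx_left_bonds_right hnet k)]
  · exact Finset.prod_congr rfl fun k _ =>
      val_override_of_disjoint _ (disjoint_idx_right_bonds_left hnet k) _ _

def IsContraction (B : Tensor Ind D) (A : κ → Tensor Ind D) : Prop :=
  B.idx = frees A ∧ ∀ σ, B.val σ = contract A σ

lemma isContraction_const [Unique κ] (A : Tensor Ind D) :
    IsContraction A (fun _ : κ => A) := by
  have hbonds : bonds (fun _ : κ => A) = ∅ := by
    ext i
    rw [mem_bonds, count_const]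
    split_ifs <;> simp
  refine ⟨?_, fun σ => ?_⟩
  · ext i
    rw [mem_frees, count_const]
    split_ifs <;> simpa
  · rw [contract, hbonds, Fintype.sum_unique, Fintype.prod_unique]
    exact A.depends _ _ fun i _ => (override_of_notMem σ _ (Finset.notMem_empty i)).symm

lemma isContraction_comp_equiv (e : κ₁ ≃ κ) {B : Tensor Ind D} {A : κ → Tensor Ind D} :
    IsContraction B (A ∘ e) ↔ IsContraction B A := by
  have hfrees : frees (A ∘ e) = frees A := by
    ext i
    rw [mem_frees, mem_frees, count_comp_equiv]
  simp only [IsContraction, hfrees, contract_comp_equiv]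

theorem IsContraction.binContract {A₁ : κ₁ → Tensor Ind D} {A₂ : κ₂ → Tensor Ind D}
    {B₁ B₂ : Tensor Ind D} (hnet : IsNetwork (Sum.elim A₁ A₂))
    (h₁ : IsContraction B₁ A₁) (h₂ : IsContraction B₂ A₂) :
    IsContraction (B₁.binContract B₂) (Sum.elim A₁ A₂) := by
  obtain ⟨hidx₁, hval₁⟩ := h₁
  obtain ⟨hidx₂, hval₂⟩ := h₂
  refine ⟨?_, fun σ => ?_⟩
  · rw [frees_sum_elim hnet, ← hidx₁, ← hidx₂]
    rfl
  · rw [contract_sum_elim hnet]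
    simp only [Tensor.binContract, hval₁, hval₂]
    rw [hidx₁, hidx₂]

end Contract

end Tensor

namespace CTree

variable {Ind : Type} {D : Ind → Type}

lemma leafFamily_leaf (A : Tensor Ind D) : (leaf A).leafFamily = fun _ => A := by
  funext ⟨0, _⟩
  rfl

def nodeLeafEquiv (l r : CTree Ind D) :
    Fin l.leaves.length ⊕ Fin r.leaves.length ≃ Fin (node l r).leaves.length :=
  finSumFinEquiv.trans (finCongr List.length_append.symm)

lemma leafFamily_node_comp_nodeLeafEquiv (l r : CTree Ind D) :
    (node l r).leafFamily ∘ nodeLeafEquiv l r = Sum.elim l.leafFamily r.leafFamily := by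
  funext k
  cases k with
  | inl k => exact List.getElem_append_left k.isLt
  | inr k =>
    exact (List.getElem_append_right (Nat.le_add_right _ _)).trans (by simp [leafFamily])

end CTree

/-- correctness of the recursive contraction algorithm.  For any tensor
network `N` and contraction tree `T` for `N` (a rooted binary tree whose leaves are the
tensors of `N`), recursively contracting according to `T` yields the contraction of
`N`: the resulting tensor has indices the free indices of `N` and values the
contraction of `N`. -/
theorem ctree_eval_eq_contract
    {Ind : Type} {D : Ind → Type} [∀ i, Fintype (D i)]
    (T : CTree Ind D)
    (hnet : Tensor.IsNetwork T.leafFamily) :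
    T.eval.idx = Tensor.frees T.leafFamily
      ∧ ∀ σ : ∀ i, D i, T.eval.val σ = Tensor.contract T.leafFamily σ := by
  induction T with
  | leaf A =>
    rw [CTree.leafFamily_leaf]
    exact Tensor.isContraction_const (κ := Fin 1) A
  | node l r ihl ihr =>
    have hsplit : Tensor.IsNetwork (Sum.elim l.leafFamily r.leafFamily) := by
      rwa [← CTree.leafFamily_node_comp_nodeLeafEquiv, Tensor.isNetwork_comp_equiv]
    refine (Tensor.isContraction_comp_equiv (CTree.nodeLeafEquiv l r)).mp ?_
    rw [CTree.leafFamily_node_comp_nodeLeafEquiv]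
    exact Tensor.IsContraction.binContract hsplit (ihl hsplit.sum_elim_left)
      (ihr hsplit.sum_elim_right)
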